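/- arXiv:2404.11872 — 2 statements merged into one kernel-verified Lean document; each statement's English description precedes it below -/
import Mathlib

section
/- Let T ∈ (0,∞], let λ : [0,T) → ℝ be smooth, and let β : ℝ × [0,T) → ℝ be smooth, 2π-periodic in θ, and satisfy the evolution equation ∂β/∂t = ∂²β/∂θ² + β − λ(t). If ∫₀^{2π} β(θ,0) cos θ dθ = 0 and ∫₀^{2π} β(θ,0) sin θ dθ = 0, then for every t ∈ [0,T) one has ∫₀^{2π} β(θ,t) cos θ dθ = 0 and ∫₀^{2π} β(θ,t) sin θ dθ = 0. (Consequently, a curve which is initially an ℓ-convex Legendre curve remains ℓ-convex under the flow.) -/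
open Real Filter MeasureTheory Set Function
open scoped ENNReal

/-!
`cos` and `sin` are `2π`-periodic solutions of `g'' + g = 0` with mean zero. Integrating by parts
twice over a period, the moment `∫ β(θ, t) g(θ) dθ` therefore has time derivative
`∫ (β'' + β - λ) g = ∫ β (g'' + g) - λ ∫ g = 0` at every interior time, and since it is continuous
on the whole (convex) time interval it is constant there.
-/

/-- The time interval `[0, T)` for `T ∈ (0, ∞]`, as a subset of ℝ. -/
def timeDom (T : ℝ≥0∞) : Set ℝ := {t : ℝ | 0 ≤ t ∧ ENNReal.ofReal t < T}

theorem Function.Periodic.deriv {f : ℝ → ℝ} {c : ℝ} (h : Periodic f c) :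
    Periodic (deriv f) c := fun x => by
  rw [← deriv_comp_add_const, h.funext]

theorem intervalIntegral_deriv_mul_eq_neg_of_periodic {f g : ℝ → ℝ} {c : ℝ}
    (hf : ContDiff ℝ 1 f) (hg : ContDiff ℝ 1 g) (hfc : Periodic f c) (hgc : Periodic g c)
    (a : ℝ) :
    ∫ θ in a..a + c, deriv f θ * g θ = -∫ θ in a..a + c, f θ * deriv g θ := by
  have hf' := hf.continuous_deriv le_rfl
  have hg' := hg.continuous_deriv le_rfl
  have hf₀ := hf.continuous
  have hg₀ := hg.continuous
  have hsum := intervalIntegral.integral_deriv_mul_eq_sub (a := a) (b := a + c)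
    (fun x _ => (hf.differentiable one_ne_zero x).hasDerivAt)
    (fun x _ => (hg.differentiable one_ne_zero x).hasDerivAt)
    (hf'.intervalIntegrable _ _) (hg'.intervalIntegrable _ _)
  rw [intervalIntegral.integral_add (Continuous.intervalIntegrable (by fun_prop) _ _)
    (Continuous.intervalIntegrable (by fun_prop) _ _), hfc a, hgc a, sub_self] at hsum
  linarith

theorem intervalIntegral_deriv_deriv_mul_of_periodic {f g : ℝ → ℝ} {c : ℝ}
    (hf : ContDiff ℝ 2 f) (hg : ContDiff ℝ 2 g) (hfc : Periodic f c) (hgc : Periodic g c)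
    (a : ℝ) :
    ∫ θ in a..a + c, deriv (deriv f) θ * g θ = ∫ θ in a..a + c, f θ * deriv (deriv g) θ := by
  rw [intervalIntegral_deriv_mul_eq_neg_of_periodic hf.deriv' (hg.of_le one_le_two) hfc.deriv
    hgc, neg_eq_iff_eq_neg, ← intervalIntegral_deriv_mul_eq_neg_of_periodic
    (hf.of_le one_le_two) hg.deriv' hfc hgc.deriv]

theorem intervalIntegral_iteratedDeriv_two_add_sub_mul_eq_zero_of_periodic
    {f g : ℝ → ℝ} {c : ℝ} (hf : ContDiff ℝ 2 f) (hg : ContDiff ℝ 2 g)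
    (hfc : Periodic f c) (hgc : Periodic g c) (hg'' : ∀ θ, deriv (deriv g) θ = -g θ)
    (hg0 : ∫ θ in (0 : ℝ)..c, g θ = 0) (l : ℝ) :
    ∫ θ in (0 : ℝ)..c, (iteratedDeriv 2 f θ + f θ - l) * g θ = 0 := by
  have hf'' : Continuous (deriv (deriv f)) := hf.deriv'.continuous_deriv le_rfl
  have hf₀ := hf.continuous
  have hg₀ := hg.continuous
  have hIBP := intervalIntegral_deriv_deriv_mul_of_periodic hf hg hfc hgc 0
  simp only [zero_add, hg'', mul_neg, intervalIntegral.integral_neg] at hIBP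
  simp only [iteratedDeriv_succ, iteratedDeriv_zero, add_mul, sub_mul]
  rw [intervalIntegral.integral_sub, intervalIntegral.integral_add,
    intervalIntegral.integral_const_mul, hg0, hIBP]
  · ring
  all_goals exact Continuous.intervalIntegrable (by fun_prop) _ _

section Parametric

variable {F : ℝ → ℝ → ℝ} {S U : Set ℝ} {n : WithTop ℕ∞}

theorem ContDiffOn.contDiff_of_uncurry_prod_univ (hF : ContDiffOn ℝ n (uncurry F) (S ×ˢ univ))
    {s : ℝ} (hs : s ∈ S) : ContDiff ℝ n (F s) :=
  contDiffOn_univ.mp <| hF.comp (contDiff_prodMk_right s).contDiffOn fun _ _ => ⟨hs, trivial⟩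

theorem ContinuousOn.intervalIntegral_of_uncurry_prod_univ
    (hF : ContinuousOn (uncurry F) (S ×ˢ univ)) (a b : ℝ) :
    ContinuousOn (fun s => ∫ θ in a..b, F s θ) S := by
  rw [continuousOn_iff_continuous_domRestrict]
  exact intervalIntegral.continuous_parametric_intervalIntegral_of_continuous'
    (f := fun (s : S) θ => F s θ)
    (hF.comp_continuous (continuous_subtype_val.prodMap continuous_id) fun p => ⟨p.1.2, trivial⟩)
    a b

theorem ContDiffOn.hasDerivAt_uncurry_left (hU : IsOpen U)
    (hF : ContDiffOn ℝ 1 (uncurry F) (U ×ˢ univ)) {s : ℝ} (hs : s ∈ U) (θ : ℝ) :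
    HasDerivAt (fun s => F s θ) (fderiv ℝ (uncurry F) (s, θ) (1, 0)) s := by
  have hpath : HasDerivAt (fun s : ℝ => (s, θ)) ((1 : ℝ), (0 : ℝ)) s :=
    (hasDerivAt_id s).prodMk (hasDerivAt_const s θ)
  exact ((hF.differentiableOn one_ne_zero (s, θ) ⟨hs, trivial⟩).differentiableAt
    (prod_mem_nhds (hU.mem_nhds hs) univ_mem)).hasFDerivAt.comp_hasDerivAt s hpath

theorem ContDiffOn.continuousOn_deriv_uncurry_left (hU : IsOpen U)
    (hF : ContDiffOn ℝ 1 (uncurry F) (U ×ˢ univ)) :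
    ContinuousOn (fun q : ℝ × ℝ => deriv (fun s => F s q.2) q.1) (U ×ˢ univ) :=
  ((hF.continuousOn_fderiv_of_isOpen (hU.prod isOpen_univ) le_rfl).clm_apply
    continuousOn_const).congr fun q hq => (hF.hasDerivAt_uncurry_left hU hq.1 q.2).deriv

theorem ContDiffOn.hasDerivAt_intervalIntegral_of_uncurry (hU : IsOpen U)
    (hF : ContDiffOn ℝ 1 (uncurry F) (U ×ˢ univ)) {s₀ : ℝ} (hs₀ : s₀ ∈ U) (a b : ℝ) :
    HasDerivAt (fun s => ∫ θ in a..b, F s θ) (∫ θ in a..b, deriv (fun s => F s θ) s₀) s₀ := by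
  have hF' := hF.continuousOn_deriv_uncurry_left hU
  obtain ⟨K, hK, hKU, hKc⟩ := local_compact_nhds (hU.mem_nhds hs₀)
  obtain ⟨C, hC⟩ := (hKc.prod isCompact_uIcc).exists_bound_of_continuousOn
    (hF'.mono (prod_mono hKU (subset_univ _)))
  refine (intervalIntegral.hasDerivAt_integral_of_dominated_loc_of_deriv_le (μ := volume)
    (F := F) (F' := fun s θ => deriv (fun s => F s θ) s) (bound := fun _ => C)
    hK ?_ ?_ ?_ ?_ intervalIntegrable_const ?_).2
  · filter_upwards [hU.mem_nhds hs₀] with s hs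
    exact (hF.contDiff_of_uncurry_prod_univ hs).continuous.aestronglyMeasurable
  · exact (hF.contDiff_of_uncurry_prod_univ hs₀).continuous.intervalIntegrable _ _
  · exact (hF'.comp_continuous (Continuous.prodMk_right s₀)
      fun _ => ⟨hs₀, trivial⟩).aestronglyMeasurable
  · exact ae_of_all _ fun θ hθ s hs => hC (s, θ) ⟨hs, uIoc_subset_uIcc hθ⟩
  · exact ae_of_all _ fun θ _ s hs =>
      (hF.hasDerivAt_uncurry_left hU (hKU hs) θ).differentiableAt.hasDerivAt

end Parametric

theorem Convex.eq_of_hasDerivAt_interior_eq_zero {D : Set ℝ} (hD : Convex ℝ D) {f : ℝ → ℝ}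
    (hf : ContinuousOn f D) (hf' : ∀ x ∈ interior D, HasDerivAt f 0 x)
    {x y : ℝ} (hx : x ∈ D) (hy : y ∈ D) : f x = f y := by
  have hdiff : DifferentiableOn ℝ f (interior D) := fun x hx =>
    (hf' x hx).differentiableAt.differentiableWithinAt
  have hmono := monotoneOn_of_deriv_nonneg hD hf hdiff fun x hx => (hf' x hx).deriv.ge
  have hanti := antitoneOn_of_deriv_nonpos hD hf hdiff fun x hx => (hf' x hx).deriv.le
  rcases le_total x y with hxy | hxy
  · exact (hmono hx hy hxy).antisymm (hanti hx hy hxy)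
  · exact (hanti hy hx hxy).antisymm (hmono hy hx hxy)

theorem convex_timeDom (T : ℝ≥0∞) : Convex ℝ (timeDom T) :=
  (convex_Ici 0).inter <| OrdConnected.convex <| ordConnected_Iio.preimage_ennreal_ofReal

theorem zero_mem_timeDom_of_mem {T : ℝ≥0∞} {t : ℝ} (ht : t ∈ timeDom T) : (0 : ℝ) ∈ timeDom T :=
  ⟨le_rfl, lt_of_le_of_lt (ENNReal.ofReal_le_ofReal ht.1) ht.2⟩

theorem Convex.intervalIntegral_mul_eq_of_curvatureFlow {D : Set ℝ} (hD : Convex ℝ D)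
    {lam : ℝ → ℝ} {β : ℝ → ℝ → ℝ} {c : ℝ} (hβ : ContDiffOn ℝ 2 (uncurry β) (D ×ˢ univ))
    (hper : ∀ t ∈ D, Periodic (β t) c)
    (hpde : ∀ t ∈ D, ∀ θ : ℝ,
      derivWithin (fun s => β s θ) D t = iteratedDeriv 2 (β t) θ + β t θ - lam t)
    {g : ℝ → ℝ} (hg : ContDiff ℝ 2 g) (hgc : Periodic g c)
    (hg'' : ∀ θ, deriv (deriv g) θ = -g θ) (hg0 : ∫ θ in (0 : ℝ)..c, g θ = 0)
    {t₀ t : ℝ} (ht₀ : t₀ ∈ D) (ht : t ∈ D) :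
    ∫ θ in (0 : ℝ)..c, β t θ * g θ = ∫ θ in (0 : ℝ)..c, β t₀ θ * g θ := by
  have hβg : ContDiffOn ℝ 2 (uncurry fun s θ => β s θ * g θ) (D ×ˢ univ) :=
    hβ.mul (hg.comp (contDiff_snd (E := ℝ))).contDiffOn
  have hβ₁ : ContDiffOn ℝ 1 (uncurry β) (interior D ×ˢ univ) :=
    (hβ.mono (prod_mono interior_subset subset_rfl)).of_le one_le_two
  have hβg₁ : ContDiffOn ℝ 1 (uncurry fun s θ => β s θ * g θ) (interior D ×ˢ univ) :=
    (hβg.mono (prod_mono interior_subset subset_rfl)).of_le one_le_two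
  refine hD.eq_of_hasDerivAt_interior_eq_zero
    (hβg.continuousOn.intervalIntegral_of_uncurry_prod_univ 0 c) (fun s hs => ?_) ht ht₀
  have hsD := interior_subset hs
  convert hβg₁.hasDerivAt_intervalIntegral_of_uncurry isOpen_interior hs 0 c using 1
  refine ((intervalIntegral.integral_congr fun θ _ => ?_).trans
    (intervalIntegral_iteratedDeriv_two_add_sub_mul_eq_zero_of_periodic
      (hβ.contDiff_of_uncurry_prod_univ hsD) hg (hper s hsD) hgc hg'' hg0 (lam s))).symm
  rw [← hpde s hsD θ, derivWithin_of_mem_nhds (mem_interior_iff_mem_nhds.mp hs),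
    deriv_mul_const (hβ₁.hasDerivAt_uncurry_left isOpen_interior hs θ).differentiableAt]

theorem ell_convexity_preserved_general
    (T : ℝ≥0∞)
    (lam : ℝ → ℝ) (β : ℝ → ℝ → ℝ)
    (hβ : ContDiffOn ℝ (⊤ : ℕ∞) (Function.uncurry β) (timeDom T ×ˢ (Set.univ : Set ℝ)))
    (hper : ∀ t ∈ timeDom T, Function.Periodic (β t) (2 * π))
    (hpde : ∀ t ∈ timeDom T, ∀ θ : ℝ,
      derivWithin (fun s => β s θ) (timeDom T) t
        = iteratedDeriv 2 (β t) θ + β t θ - lam t)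
    (hcos0 : ∫ θ in (0:ℝ)..(2 * π), β 0 θ * Real.cos θ = 0)
    (hsin0 : ∫ θ in (0:ℝ)..(2 * π), β 0 θ * Real.sin θ = 0) :
    ∀ t ∈ timeDom T,
      (∫ θ in (0:ℝ)..(2 * π), β t θ * Real.cos θ = 0) ∧
      (∫ θ in (0:ℝ)..(2 * π), β t θ * Real.sin θ = 0) := by
  intro t ht
  have hβ₂ : ContDiffOn ℝ 2 (uncurry β) (timeDom T ×ˢ univ) :=
    hβ.of_le (WithTop.coe_le_coe.mpr le_top)
  have hmoment := fun g hg hgc hg'' hg0 =>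
    (convex_timeDom T).intervalIntegral_mul_eq_of_curvatureFlow hβ₂ hper hpde (g := g)
      hg hgc hg'' hg0 (zero_mem_timeDom_of_mem ht) ht
  exact ⟨(hmoment cos contDiff_cos cos_periodic (by simp) (by simp)).trans hcos0,
    (hmoment sin contDiff_sin sin_periodic (by simp) (by simp)).trans hsin0⟩

theorem ell_convexity_preserved
    (T : ℝ≥0∞) (hT : 0 < T)
    (lam : ℝ → ℝ) (β : ℝ → ℝ → ℝ)
    (hlam : ContDiffOn ℝ (⊤ : ℕ∞) lam (timeDom T))
    (hβ : ContDiffOn ℝ (⊤ : ℕ∞) (Function.uncurry β) (timeDom T ×ˢ (Set.univ : Set ℝ)))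
    (hper : ∀ t ∈ timeDom T, Function.Periodic (β t) (2 * π))
    (hpde : ∀ t ∈ timeDom T, ∀ θ : ℝ,
      derivWithin (fun s => β s θ) (timeDom T) t
        = iteratedDeriv 2 (β t) θ + β t θ - lam t)
    (hcos0 : ∫ θ in (0:ℝ)..(2 * π), β 0 θ * Real.cos θ = 0)
    (hsin0 : ∫ θ in (0:ℝ)..(2 * π), β 0 θ * Real.sin θ = 0) :
    ∀ t ∈ timeDom T,
      (∫ θ in (0:ℝ)..(2 * π), β t θ * Real.cos θ = 0) ∧
      (∫ θ in (0:ℝ)..(2 * π), β t θ * Real.sin θ = 0) :=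
  ell_convexity_preserved_general T lam β hβ hper hpde hcos0 hsin0
end

section
/- Let p : ℝ → ℝ be a smooth 2π-periodic function, the support function of an ℓ-convex Legendre curve with ℓ = 1, with β = p + p'', algebraic length L = ∫₀^{2π} p(θ) dθ and algebraic area A = (1/2)∫₀^{2π} p(θ)β(θ) dθ. Then for every real τ ≤ 8, ∫₀^{2π} β(θ)² dθ ≥ 2A + τ(L²/(4π) − A). Moreover, for every τ < 8, equality holds if and only if the curve is a circle, i.e. p(θ) = a₀ + a₁ cos θ + b₁ sin θ for some real constants a₀, a₁, b₁. -/
open Real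

/-- The curvature quantity `β = p + p''` of an ℓ-convex Legendre curve (ℓ = 1)
with support function `p`. -/
noncomputable def betaF (p : ℝ → ℝ) : ℝ → ℝ := fun θ => p θ + iteratedDeriv 2 p θ

/-- The algebraic length `L = ∫₀^{2π} p`. -/
noncomputable def algLen (p : ℝ → ℝ) : ℝ := ∫ θ in (0:ℝ)..(2 * π), p θ

/-- The algebraic area `A = (1/2) ∫₀^{2π} p β`. -/
noncomputable def algArea (p : ℝ → ℝ) : ℝ :=
  (1 / 2) * ∫ θ in (0:ℝ)..(2 * π), p θ * betaF p θ

/-!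
Write `c n` for the Fourier coefficients of `p` on `[0, 2π]`. Differentiation multiplies `c n`
by `i n`, so by Parseval's identity `∫ p²`, `∫ p'²` and `∫ p''²` are `2π ∑ |c n|²` weighted by
`1`, `n²` and `n⁴`; integrating `p p''` by parts gives `2A = ∫ p² - ∫ p'²` and
`∫ β² = ∫ p² - 2 ∫ p'² + ∫ p''²`, while `L = 2π c 0`. Hence
`∫ β² - 2A - τ (L² / 4π - A) = 2π ∑_{n ≠ 0} (n² - 1) (n² - τ / 2) |c n|²`.
Every term is nonnegative when `τ ≤ 8`, and when `τ < 8` the sum vanishes exactly when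
`c n = 0` for `|n| ≥ 2`, that is, when `p` is a trigonometric polynomial of degree at most one.
-/

open MeasureTheory Set

theorem Function.Periodic.iteratedDeriv {𝕜 F : Type*} [NontriviallyNormedField 𝕜]
    [NormedAddCommGroup F] [NormedSpace 𝕜 F] {f : 𝕜 → F} {c : 𝕜}
    (h : Function.Periodic f c) (k : ℕ) : Function.Periodic (iteratedDeriv k f) c := fun x => by
  simpa [h.funext] using (congrFun (iteratedDeriv_comp_add_const k f c) x).symm

theorem fourierCoeffOn_zero {E : Type*} [NormedAddCommGroup E] [NormedSpace ℂ E] {a b : ℝ}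
    (hab : a < b) (f : ℝ → E) : fourierCoeffOn hab f 0 = (1 / (b - a)) • ∫ x in a..b, f x := by
  simp [fourierCoeffOn_eq_integral]

section FourierCoeff

variable {T : ℝ} (hT : 0 < T)

theorem fourierCoeffOn_deriv_of_periodic {f f' : ℝ → ℂ} (hf : ∀ x, HasDerivAt f (f' x) x)
    (hf' : Continuous f') (hper : Function.Periodic f T) (n : ℤ) :
    fourierCoeffOn hT f' n = 2 * π * Complex.I * n / T * fourierCoeffOn hT f n := by
  have hf'int := hf'.intervalIntegrable (μ := volume) 0 T
  rcases eq_or_ne n 0 with rfl | hn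
  · simp [fourierCoeffOn_zero,
      intervalIntegral.integral_eq_sub_of_hasDerivAt (fun x _ => hf x) hf'int, hper.eq]
  · have hT' : (T : ℂ) ≠ 0 := Complex.ofReal_ne_zero.2 hT.ne'
    rw [fourierCoeffOn_of_hasDerivAt hT hn (fun x _ => hf x) hf'int, hper.eq, sub_self, mul_zero,
      zero_sub, Complex.ofReal_zero, sub_zero]
    field_simp

theorem fourierCoeffOn_iteratedDeriv {f : ℝ → ℝ} {k : ℕ} (hf : ContDiff ℝ k f)
    (hper : Function.Periodic f T) (n : ℤ) :
    fourierCoeffOn hT (fun x => ((iteratedDeriv k f x : ℝ) : ℂ)) n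
      = (2 * π * Complex.I * n / T) ^ k * fourierCoeffOn hT (fun x => (f x : ℂ)) n := by
  induction k with
  | zero => simp
  | succ k ih =>
    have hderiv : ∀ x, HasDerivAt (fun x => ((iteratedDeriv k f x : ℝ) : ℂ))
        ((iteratedDeriv (k + 1) f x : ℝ) : ℂ) x := fun x => by
      rw [iteratedDeriv_succ]
      exact ((hf.differentiable_iteratedDeriv' k).differentiableAt.hasDerivAt).ofReal_comp
    rw [fourierCoeffOn_deriv_of_periodic hT hderiv
      (Complex.continuous_ofReal.comp (hf.continuous_iteratedDeriv' _))
      (fun x => congrArg Complex.ofReal (hper.iteratedDeriv k x)), ih (hf.of_le (by norm_cast; omega)),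
      pow_succ]
    ring

theorem hasSum_sq_fourierCoeffOn_iteratedDeriv {f : ℝ → ℝ} {k : ℕ} (hf : ContDiff ℝ k f)
    (hper : Function.Periodic f T) :
    HasSum (fun n : ℤ => (2 * π * n / T) ^ (2 * k) * ‖fourierCoeffOn hT (fun x => (f x : ℂ)) n‖ ^ 2)
      (T⁻¹ * ∫ x in 0..T, iteratedDeriv k f x ^ 2) := by
  have hcont : Continuous fun x => ((iteratedDeriv k f x : ℝ) : ℂ) :=
    Complex.continuous_ofReal.comp (hf.continuous_iteratedDeriv' k)
  have hL2 : MemLp (fun x => ((iteratedDeriv k f x : ℝ) : ℂ)) 2 (volume.restrict (Ioc 0 T)) :=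
    (memLp_two_iff_integrable_sq_norm hcont.aestronglyMeasurable).2
      (((hcont.norm.pow 2).integrableOn_Icc).mono_set Ioc_subset_Icc_self)
  convert hasSum_sq_fourierCoeffOn hT hL2 using 1
  · ext n
    have hnorm : ‖(2 * π * Complex.I * n / T : ℂ)‖ = |2 * π * n / T| := by
      simp [abs_div, abs_mul, abs_of_pos hT, abs_of_pos Real.pi_pos]
    rw [fourierCoeffOn_iteratedDeriv hT hf hper, norm_mul, norm_pow, hnorm, mul_pow, ← pow_mul,
      mul_comm k, (even_two_mul k).pow_abs]
  · simp [sq_abs]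

theorem eq_sum_fourier_of_fourierCoeffOn_eq_zero {f : ℝ → ℂ} (hf : Continuous f)
    (hper : Function.Periodic f T) {s : Finset ℤ} (hs : ∀ n ∉ s, fourierCoeffOn hT f n = 0)
    (x : ℝ) : f x = ∑ n ∈ s, fourierCoeffOn hT f n * fourier n (x : AddCircle T) := by
  have : Fact (0 < T) := ⟨hT⟩
  let F : C(AddCircle T, ℂ) := ⟨hper.lift, hf.quotient_liftOn' _⟩
  have hF : ∀ y : ℝ, F y = f y := fun y => rfl
  have hcoeff : ∀ n, fourierCoeff F n = fourierCoeffOn hT f n := fun n => by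
    rw [fourierCoeff_eq_intervalIntegral _ n 0, fourierCoeffOn_eq_integral]
    simp [hF]
  have hsupp : ∀ n ∉ s, fourierCoeff F n • fourier n (x : AddCircle T) = 0 := fun n hn => by
    rw [hcoeff, hs n hn, zero_smul]
  have hsum := has_pointwise_sum_fourier_series_of_summable
    (summable_of_ne_finset_zero fun n hn => (hcoeff n).trans (hs n hn)) (x : AddCircle T)
  simpa [hF, hcoeff] using hsum.unique (hasSum_sum_of_ne_finset_zero hsupp)

theorem integral_mul_iteratedDeriv_two_of_periodic {f : ℝ → ℝ} (hf : ContDiff ℝ 2 f)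
    (hper : Function.Periodic f T) :
    ∫ x in 0..T, f x * iteratedDeriv 2 f x = -∫ x in 0..T, deriv f x ^ 2 := by
  have hf1 : ContDiff ℝ 1 (deriv f) := hf.iterate_deriv' 1 1
  have hper' : deriv f T = deriv f 0 := by simpa using (hper.iteratedDeriv 1).eq
  rw [iteratedDeriv_succ, iteratedDeriv_one, intervalIntegral.integral_mul_deriv_eq_deriv_mul
    (fun x _ => (hf.differentiable two_ne_zero x).hasDerivAt)
    (fun x _ => (hf1.differentiable one_ne_zero x).hasDerivAt)
    (hf1.continuous.intervalIntegrable _ _) (hf1.continuous_deriv_one.intervalIntegrable _ _),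
    hper.eq, hper']
  simp [sq]

end FourierCoeff

/-- The Fourier multiplier of the quadratic form `∫ β² - (2 A + τ (L² / 4π - A))`. -/
noncomputable def deficitMultiplier (τ : ℝ) (n : ℤ) : ℝ :=
  if n = 0 then 0 else ((n : ℝ) ^ 2 - 1) * ((n : ℝ) ^ 2 - τ / 2)

theorem four_le_sq_of_two_le_abs {n : ℤ} (hn : 2 ≤ |n|) : (4 : ℝ) ≤ (n : ℝ) ^ 2 := by
  have habs : (2 : ℝ) ≤ |(n : ℝ)| := by exact_mod_cast hn
  nlinarith [sq_abs (n : ℝ)]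

theorem deficitMultiplier_of_two_le_abs (τ : ℝ) {n : ℤ} (hn : 2 ≤ |n|) :
    deficitMultiplier τ n = ((n : ℝ) ^ 2 - 1) * ((n : ℝ) ^ 2 - τ / 2) :=
  if_neg (by rintro rfl; simp at hn)

theorem deficitMultiplier_pos {τ : ℝ} (hτ : τ < 8) {n : ℤ} (hn : 2 ≤ |n|) :
    0 < deficitMultiplier τ n := by
  have := four_le_sq_of_two_le_abs hn
  rw [deficitMultiplier_of_two_le_abs τ hn]
  exact mul_pos (by linarith) (by linarith)

theorem deficitMultiplier_nonneg {τ : ℝ} (hτ : τ ≤ 8) (n : ℤ) : 0 ≤ deficitMultiplier τ n := by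
  rcases lt_or_ge |n| 2 with hn | hn
  · obtain rfl | rfl | rfl : n = 0 ∨ n = 1 ∨ n = -1 := by
      have := abs_lt.1 hn; omega
    all_goals simp [deficitMultiplier]
  · have := four_le_sq_of_two_le_abs hn
    rw [deficitMultiplier_of_two_le_abs τ hn]
    exact mul_nonneg (by linarith) (by linarith)

section SupportFunction

variable {p : ℝ → ℝ}

theorem fourierCoeffOn_zero_eq_algLen :
    fourierCoeffOn two_pi_pos (fun x => (p x : ℂ)) 0 = ((algLen p / (2 * π) : ℝ) : ℂ) := by
  rw [fourierCoeffOn_zero, intervalIntegral.integral_ofReal, algLen, Complex.real_smul]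
  push_cast
  ring

theorem two_mul_algArea (hp : ContDiff ℝ 2 p) (hper : Function.Periodic p (2 * π)) :
    2 * algArea p = (∫ θ in 0..2 * π, p θ ^ 2) - ∫ θ in 0..2 * π, deriv p θ ^ 2 := by
  have hexpand : ∀ θ, p θ * betaF p θ = p θ ^ 2 + p θ * iteratedDeriv 2 p θ := fun θ => by
    rw [betaF]; ring
  have h0 : IntervalIntegrable (fun θ => p θ ^ 2) volume 0 (2 * π) :=
    (hp.continuous.pow 2).intervalIntegrable _ _
  have h1 : IntervalIntegrable (fun θ => p θ * iteratedDeriv 2 p θ) volume 0 (2 * π) :=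
    (hp.continuous.mul (hp.continuous_iteratedDeriv' 2)).intervalIntegrable _ _
  simp only [algArea, hexpand]
  rw [intervalIntegral.integral_add h0 h1, integral_mul_iteratedDeriv_two_of_periodic hp hper]
  ring

theorem integral_betaF_sq (hp : ContDiff ℝ 2 p) (hper : Function.Periodic p (2 * π)) :
    ∫ θ in 0..2 * π, betaF p θ ^ 2 = (∫ θ in 0..2 * π, p θ ^ 2)
      - 2 * (∫ θ in 0..2 * π, deriv p θ ^ 2) + ∫ θ in 0..2 * π, iteratedDeriv 2 p θ ^ 2 := by
  have hexpand : ∀ θ, betaF p θ ^ 2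
      = p θ ^ 2 + 2 * (p θ * iteratedDeriv 2 p θ) + iteratedDeriv 2 p θ ^ 2 := fun θ => by
    rw [betaF]; ring
  have h0 : IntervalIntegrable (fun θ => p θ ^ 2) volume 0 (2 * π) :=
    (hp.continuous.pow 2).intervalIntegrable _ _
  have h1 : IntervalIntegrable (fun θ => 2 * (p θ * iteratedDeriv 2 p θ)) volume 0 (2 * π) :=
    ((hp.continuous.mul (hp.continuous_iteratedDeriv' 2)).intervalIntegrable _ _).const_mul 2
  have h2 : IntervalIntegrable (fun θ => iteratedDeriv 2 p θ ^ 2) volume 0 (2 * π) :=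
    ((hp.continuous_iteratedDeriv' 2).pow 2).intervalIntegrable _ _
  simp only [hexpand]
  rw [intervalIntegral.integral_add (h0.add h1) h2, intervalIntegral.integral_add h0 h1,
    intervalIntegral.integral_const_mul, integral_mul_iteratedDeriv_two_of_periodic hp hper]
  ring

theorem hasSum_deficitMultiplier (hp : ContDiff ℝ 2 p) (hper : Function.Periodic p (2 * π))
    (τ : ℝ) :
    HasSum (fun n : ℤ => 2 * π * deficitMultiplier τ n
        * ‖fourierCoeffOn two_pi_pos (fun x => (p x : ℂ)) n‖ ^ 2)
      ((∫ θ in 0..2 * π, betaF p θ ^ 2)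
        - (2 * algArea p + τ * (algLen p ^ 2 / (4 * π) - algArea p))) := by
  set S : ℤ → ℝ := fun n => ‖fourierCoeffOn two_pi_pos (fun x => (p x : ℂ)) n‖ ^ 2
  have parseval (k : ℕ) (hk : k ≤ 2) :
      HasSum (fun n : ℤ => (n : ℝ) ^ (2 * k) * S n)
        ((2 * π)⁻¹ * ∫ θ in 0..2 * π, iteratedDeriv k p θ ^ 2) := by
    simpa [mul_div_cancel_left₀ _ two_pi_pos.ne'] using
      hasSum_sq_fourierCoeffOn_iteratedDeriv two_pi_pos (hp.of_le (by exact_mod_cast hk)) hper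
  have hS0 : S 0 = (algLen p / (2 * π)) ^ 2 := by
    simp only [S, fourierCoeffOn_zero_eq_algLen, Complex.norm_real, Real.norm_eq_abs, sq_abs]
  have h0 := parseval 0 (by norm_num)
  have h1 := parseval 1 (by norm_num)
  have h2 := parseval 2 (by norm_num)
  simp only [mul_zero, pow_zero, one_mul, iteratedDeriv_zero, iteratedDeriv_one] at h0 h1
  convert (((h2.sub h1).sub (((h1.sub h0).add (hasSum_ite_eq 0 (S 0))).mul_left (τ / 2))).mul_left
    (2 * π)) using 1
  · rfl
  · ext n
    rcases eq_or_ne n 0 with rfl | hn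
    · simp [deficitMultiplier]
    · simp only [deficitMultiplier, if_neg hn]
      ring
  · have hA : algArea p = ((∫ θ in 0..2 * π, p θ ^ 2) - ∫ θ in 0..2 * π, deriv p θ ^ 2) / 2 := by
      linarith [two_mul_algArea hp hper]
    rw [integral_betaF_sq hp hper, hS0, hA]
    field_simp
    ring

theorem exists_eq_circle_of_fourierCoeffOn_eq_zero (hp : Continuous p)
    (hper : Function.Periodic p (2 * π))
    (h : ∀ n : ℤ, 2 ≤ |n| → fourierCoeffOn two_pi_pos (fun x => (p x : ℂ)) n = 0) :
    ∃ a₀ a₁ b₁ : ℝ, ∀ θ, p θ = a₀ + a₁ * Real.cos θ + b₁ * Real.sin θ := by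
  set c := fourierCoeffOn two_pi_pos (fun x => (p x : ℂ))
  refine ⟨(c 0).re, (c 1).re + (c (-1)).re, (c (-1)).im - (c 1).im, fun θ => ?_⟩
  have hfourier (n : ℤ) :
      fourier n (θ : AddCircle (2 * π)) = Complex.exp ((n * θ : ℝ) * Complex.I) := by
    rw [fourier_coe_apply]
    congr 1
    field_simp
    push_cast
    ring
  have hθ := congrArg Complex.re <| eq_sum_fourier_of_fourierCoeffOn_eq_zero two_pi_pos
    (f := fun x => (p x : ℂ)) (Complex.continuous_ofReal.comp hp)
    (fun x => congrArg Complex.ofReal (hper x)) (s := {-1, 0, 1})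
    (fun n hn => h n <| by
      simp only [Finset.mem_insert, Finset.mem_singleton] at hn
      rw [le_abs]
      omega) θ
  simp [hfourier, Complex.exp_re, Complex.exp_im] at hθ
  rw [hθ]
  ring

theorem integral_betaF_sq_eq_of_circle {a₀ a₁ b₁ : ℝ}
    (h : ∀ θ, p θ = a₀ + a₁ * Real.cos θ + b₁ * Real.sin θ) (τ : ℝ) :
    ∫ θ in 0..2 * π, betaF p θ ^ 2
      = 2 * algArea p + τ * (algLen p ^ 2 / (4 * π) - algArea p) := by
  have hp : p = fun θ => a₀ + a₁ * Real.cos θ + b₁ * Real.sin θ := funext h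
  have hβ : ∀ θ, betaF p θ = a₀ := fun θ => by
    have hderiv : deriv p = fun θ => -(a₁ * Real.sin θ) + b₁ * Real.cos θ := by
      ext θ; simp (disch := fun_prop) [hp]
    simp (disch := fun_prop) [betaF, iteratedDeriv_succ, hderiv, h]
    ring
  have hL : algLen p = 2 * π * a₀ := by
    rw [algLen, hp, intervalIntegral.integral_add, intervalIntegral.integral_add] <;>
      try (apply Continuous.intervalIntegrable; fun_prop)
    simp
  have hA : algArea p = π * a₀ ^ 2 := by
    rw [algArea]
    simp only [hβ]
    rw [intervalIntegral.integral_mul_const, ← algLen, hL]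
    ring
  simp only [hβ, hA, hL, intervalIntegral.integral_const, smul_eq_mul]
  field_simp
  ring

end SupportFunction

theorem beta_square_integral_inequality
    (p : ℝ → ℝ) (hp : ContDiff ℝ (⊤ : ℕ∞) p)
    (hper : Function.Periodic p (2 * π)) :
    (∀ τ : ℝ, τ ≤ 8 →
      2 * algArea p + τ * ((algLen p) ^ 2 / (4 * π) - algArea p)
        ≤ ∫ θ in (0:ℝ)..(2 * π), (betaF p θ) ^ 2) ∧
    (∀ τ : ℝ, τ < 8 →
      ((∫ θ in (0:ℝ)..(2 * π), (betaF p θ) ^ 2)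
          = 2 * algArea p + τ * ((algLen p) ^ 2 / (4 * π) - algArea p) ↔
        ∃ a₀ a₁ b₁ : ℝ, ∀ θ : ℝ,
          p θ = a₀ + a₁ * Real.cos θ + b₁ * Real.sin θ)) := by
  have hp2 : ContDiff ℝ 2 p := hp.of_le (WithTop.coe_le_coe.2 le_top)
  have hterm_nonneg {τ : ℝ} (hτ : τ ≤ 8) (n : ℤ) :
      0 ≤ 2 * π * deficitMultiplier τ n * ‖fourierCoeffOn two_pi_pos (fun x => (p x : ℂ)) n‖ ^ 2 :=
    mul_nonneg (mul_nonneg two_pi_pos.le (deficitMultiplier_nonneg hτ n)) (sq_nonneg _)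
  refine ⟨fun τ hτ => ?_, fun τ hτ =>
    ⟨fun heq => ?_, fun ⟨_, _, _, hcircle⟩ => integral_betaF_sq_eq_of_circle hcircle τ⟩⟩
  · linarith [(hasSum_deficitMultiplier hp2 hper τ).nonneg (hterm_nonneg hτ)]
  · have hsum := hasSum_deficitMultiplier hp2 hper τ
    rw [heq, sub_self, hasSum_zero_iff_of_nonneg (hterm_nonneg hτ.le)] at hsum
    refine exists_eq_circle_of_fourierCoeffOn_eq_zero hp.continuous hper fun n hn => ?_
    simpa [two_pi_pos.ne', (deficitMultiplier_pos hτ hn).ne'] using congrFun hsum n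
end
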